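/- arXiv:2405.09727 — 2 statements merged into one kernel-verified Lean document; each statement's English description precedes it below -/
import Mathlib

section
/- Let G be a hypergraph, and let G_1, G_2 be section hypergraphs of G such that G_1 ∪ G_2 = G and G_1 ∩ G_2 is a complete hypergraph. Let C(G) be the set of points in the multilinear set S(G) that satisfy a number of additional constraints, each one containing only variables corresponding to nodes and edges lying entirely in G_1 or entirely in G_2, and for i = 1,2 let C(G_i) be the projection of C(G) onto the coordinates of G_i. Then C(G) is decomposable into C(G_1) and C(G_2): the convex hull of C(G) equals the set of points z whose restriction to the coordinates of G_1 lies in the convex hull of C(G_1) and whose restriction to the coordinates of G_2 lies in the convex hull of C(G_2). -/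
/-!
Write `z` as a convex combination `∑ aₖ yₖ` of points of `C(G)` on the coordinates of `G₁`, and as
`∑ bₗ y'ₗ` on those of `G₂`. On the coordinates of `Gᵢ` a point of `S(G)` is the pattern
`p ↦ [p ⊆ T]` of its set `T` of nodes equal to `1`. Since `G₁ ∩ G₂` is complete, every nonempty
`p ⊆ V₁ ∩ V₂` is a coordinate of both sections, so both combinations give `p ⊆ T` the weight `z_p`;
by Möbius inversion over the subsets of `V₁ ∩ V₂` they induce the same distribution of the traces
`T ∩ V₁ ∩ V₂`. A coupling of the two combinations that only pairs points with equal traces then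
glues each pair `(yₖ, y'ₗ)` into a point of `C(G)`, and these glued points average to `z`.
-/

open Finset

/-- The multilinear set of the hypergraph with node set `Vset` and edge set `E`. -/
def MultilinearSet {V : Type} [DecidableEq V] (Vset : Finset V) (E : Finset (Finset V)) :
    Set (Finset V → ℝ) :=
  {z | ∃ x : V → ℝ, (∀ v ∈ Vset, x v = 0 ∨ x v = 1) ∧ (∀ v ∈ Vset, z {v} = x v) ∧
        ∀ e ∈ E, z e = ∏ v ∈ e, x v}

/-- The coordinates of the hypergraph with node set `Vset` and edge set `E`:
singleton sets for nodes, and the edges themselves. -/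
def coords {V : Type} [DecidableEq V] (Vset : Finset V) (E : Finset (Finset V)) :
    Finset (Finset V) :=
  Vset.image (fun v => ({v} : Finset V)) ∪ E

/-- A set of points depends only on the given coordinates. -/
def DependsOnlyOn {V : Type} [DecidableEq V] (A : Set (Finset V → ℝ))
    (c : Finset (Finset V)) : Prop :=
  ∀ z z' : Finset V → ℝ, (∀ p ∈ c, z p = z' p) → (z ∈ A ↔ z' ∈ A)

theorem exists_coupling {κ₁ κ₂ ρ : Type*} [Fintype κ₁] [Fintype κ₂] [DecidableEq ρ]
    {a : κ₁ → ℝ} {b : κ₂ → ℝ} (ha : ∀ k, 0 ≤ a k) (hb : ∀ l, 0 ≤ b l) {f : κ₁ → ρ} {g : κ₂ → ρ}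
    (h : ∀ r, ∑ k with f k = r, a k = ∑ l with g l = r, b l) :
    ∃ w : κ₁ × κ₂ → ℝ, (∀ kl, 0 ≤ w kl) ∧ (∀ k l, w (k, l) ≠ 0 → f k = g l) ∧
      (∀ k, ∑ l, w (k, l) = a k) ∧ ∀ l, ∑ k, w (k, l) = b l := by
  set m : ρ → ℝ := fun r => ∑ k with f k = r, a k
  have hm : ∀ r, 0 ≤ m r := fun r => sum_nonneg fun k _ => ha k
  have ha_le : ∀ k, a k ≤ m (f k) :=
    fun k => single_le_sum (fun j _ => ha j) (mem_filter.2 ⟨mem_univ k, rfl⟩)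
  have hb_le : ∀ l, b l ≤ m (g l) := fun l => by
    simp only [m, h (g l)]
    exact single_le_sum (fun j _ => hb j) (mem_filter.2 ⟨mem_univ l, rfl⟩)
  -- within each fiber `r`, the product weights `a ⊗ b` rescaled by the fiber mass `m r`
  refine ⟨fun kl => if f kl.1 = g kl.2 then a kl.1 * b kl.2 / m (f kl.1) else 0,
    fun kl => ?_, fun k l hkl => ?_, fun k => ?_, fun l => ?_⟩
  · dsimp only
    split_ifs
    exacts [div_nonneg (mul_nonneg (ha _) (hb _)) (hm _), le_rfl]
  · by_contra hne
    exact hkl (if_neg hne)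
  · calc ∑ l, (if f k = g l then a k * b l / m (f k) else 0)
        = a k * (∑ l with g l = f k, b l) / m (f k) := by
          rw [mul_sum, sum_div, sum_filter]
          simp only [eq_comm]
      _ = a k := by
          rw [← h]
          exact mul_div_cancel_of_imp fun h0 => le_antisymm (h0 ▸ ha_le k) (ha k)
  · calc ∑ k, (if f k = g l then a k * b l / m (f k) else 0)
        = (∑ k with f k = g l, a k) * b l / m (g l) := by
          rw [sum_mul, sum_div, sum_filter]
          refine sum_congr rfl fun k _ => ?_
          split_ifs with hkl <;> simp [hkl]
      _ = b l := by
          rw [mul_comm]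
          exact mul_div_cancel_of_imp fun h0 => le_antisymm (h0 ▸ hb_le l) (hb l)

theorem exists_sum_eq_on_of_mem_convexHull {ι : Type*} {C : Set (ι → ℝ)} {c : Finset ι}
    {z : ι → ℝ} (hz : z ∈ convexHull ℝ {z' | ∃ y ∈ C, ∀ p ∈ c, z' p = y p}) :
    ∃ (κ : Type) (_ : Fintype κ) (a : κ → ℝ) (y : κ → ι → ℝ), (∀ k, 0 ≤ a k) ∧
      ∑ k, a k = 1 ∧ (∀ k, y k ∈ C) ∧ ∀ p ∈ c, z p = ∑ k, a k * y k p := by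
  obtain ⟨κ, _, a, u, ha, ha1, hu, rfl⟩ := mem_convexHull_iff_exists_fintype.1 hz
  choose y hyC hyu using hu
  refine ⟨κ, inferInstance, a, y, ha, ha1, hyC, fun p hp => ?_⟩
  simp only [Finset.sum_apply, Pi.smul_apply, smul_eq_mul, hyu _ p hp]

theorem mem_convexHull_of_coupling {ι κ₁ κ₂ : Type*} [Fintype κ₁] [Fintype κ₂] [DecidableEq ι]
    {C : Set (ι → ℝ)} {c₁ c₂ : Finset ι} {z : ι → ℝ} {a : κ₁ → ℝ} {b : κ₂ → ℝ}
    {y₁ : κ₁ → ι → ℝ} {y₂ : κ₂ → ι → ℝ} {w : κ₁ × κ₂ → ℝ} (hw : ∀ kl, 0 ≤ w kl)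
    (hrow : ∀ k, ∑ l, w (k, l) = a k) (hcol : ∀ l, ∑ k, w (k, l) = b l) (ha : ∑ k, a k = 1)
    (hz₁ : ∀ p ∈ c₁, z p = ∑ k, a k * y₁ k p) (hz₂ : ∀ p ∈ c₂, z p = ∑ l, b l * y₂ l p)
    (hC : ∀ k l, w (k, l) ≠ 0 → c₁.piecewise (y₁ k) (c₂.piecewise (y₂ l) z) ∈ C) :
    z ∈ convexHull ℝ C := by
  set g : κ₁ × κ₂ → ι → ℝ := fun kl => c₁.piecewise (y₁ kl.1) (c₂.piecewise (y₂ kl.2) z)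
  have hw1 : ∑ kl, w kl = 1 := by simp only [Fintype.sum_prod_type, hrow, ha]
  have hsum : ∑ kl, w kl • g kl = z := by
    funext p
    simp only [Finset.sum_apply, Pi.smul_apply, smul_eq_mul, g]
    by_cases hp₁ : p ∈ c₁
    · simp only [piecewise_eq_of_mem _ _ _ hp₁, Fintype.sum_prod_type, ← sum_mul, hrow, hz₁ p hp₁]
    by_cases hp₂ : p ∈ c₂
    · simp only [piecewise_eq_of_notMem _ _ _ hp₁, piecewise_eq_of_mem _ _ _ hp₂,
        Fintype.sum_prod_type_right, ← sum_mul, hcol, hz₂ p hp₂]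
    · simp only [piecewise_eq_of_notMem _ _ _ hp₁, piecewise_eq_of_notMem _ _ _ hp₂, ← sum_mul,
        hw1, one_mul]
  have hmem := (convex_convexHull ℝ C).finsum_mem hw (by rwa [finsum_eq_sum_of_fintype])
    fun kl hkl => subset_convexHull ℝ C (hC kl.1 kl.2 hkl)
  rwa [finsum_eq_sum_of_fintype, hsum] at hmem

section Multilinear

variable {V : Type} [DecidableEq V]

theorem eq_zero_of_sum_supset_eq_zero {M : Type*} [AddCommMonoid M] {W R : Finset V}
    {f : Finset V → M} (h : ∀ p ⊆ W, ∑ Q ∈ W.powerset with p ⊆ Q, f Q = 0) (hR : R ⊆ W) :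
    f R = 0 := by
  classical
  by_contra hne
  obtain ⟨Q, hQ, hQmax⟩ :=
    exists_maximal (s := W.powerset.filter (f · ≠ 0)) ⟨R, mem_filter.2 ⟨mem_powerset.2 hR, hne⟩⟩
  obtain ⟨hQW, hfQ⟩ := mem_filter.1 hQ
  -- by maximality of `Q`, no proper superset of `Q` contributes to the sum
  have hsingle : ∑ Q' ∈ W.powerset with Q ⊆ Q', f Q' = f Q := by
    refine sum_eq_single_of_mem Q (mem_filter.2 ⟨hQW, subset_rfl⟩) fun Q' hQ' hne' => ?_
    obtain ⟨hQ'W, hQQ'⟩ := mem_filter.1 hQ'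
    by_contra hfQ'
    exact hne' (le_antisymm (hQmax (mem_filter.2 ⟨hQ'W, hfQ'⟩) hQQ') hQQ')
  exact hfQ (hsingle.symm.trans (h Q (mem_powerset.1 hQW)))

/-- The point of `S(G)` whose node variables are the indicator of `T`: `z_p = ∏_{v ∈ p} [v ∈ T]`. -/
def subsetIndicator (T p : Finset V) : ℝ := if p ⊆ T then 1 else 0

noncomputable def onesOn (W : Finset V) (y : Finset V → ℝ) : Finset V :=
  W.filter fun v => y {v} = 1

def sectionCoords (V' : Finset V) (E : Finset (Finset V)) : Finset (Finset V) :=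
  coords V' (E.filter fun e => e ⊆ V')

theorem subsetIndicator_union_of_inter_subset {T U p : Finset V} (h : p ∩ U ⊆ T) :
    subsetIndicator (T ∪ U) p = subsetIndicator T p := by
  have : p ⊆ T ∪ U ↔ p ⊆ T :=
    ⟨fun hp v hv => (mem_union.1 (hp hv)).elim id fun hU => h (mem_inter.2 ⟨hv, hU⟩),
      fun hp => hp.trans subset_union_left⟩
  simp only [subsetIndicator, this]

theorem sum_supset_sum_fiber {κ : Type*} [Fintype κ] {W : Finset V} (c : κ → ℝ)
    {S : κ → Finset V} (hS : ∀ k, S k ⊆ W) (p : Finset V) :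
    ∑ Q ∈ W.powerset with p ⊆ Q, ∑ k with S k = Q, c k = ∑ k, c k * subsetIndicator (S k) p := by
  rw [sum_fiberwise_eq_sum_filter, sum_filter]
  refine sum_congr rfl fun k _ => ?_
  simp [subsetIndicator, hS k]

theorem sum_fiber_eq_of_sum_mul_subsetIndicator_eq {κ₁ κ₂ : Type*} [Fintype κ₁] [Fintype κ₂]
    {W : Finset V} {a : κ₁ → ℝ} {b : κ₂ → ℝ} {T : κ₁ → Finset V} {U : κ₂ → Finset V}
    (hT : ∀ k, T k ⊆ W) (hU : ∀ l, U l ⊆ W)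
    (h : ∀ p ⊆ W, ∑ k, a k * subsetIndicator (T k) p = ∑ l, b l * subsetIndicator (U l) p)
    (R : Finset V) : ∑ k with T k = R, a k = ∑ l with U l = R, b l := by
  by_cases hR : R ⊆ W
  · rw [← sub_eq_zero]
    refine eq_zero_of_sum_supset_eq_zero
      (f := fun Q => ∑ k with T k = Q, a k - ∑ l with U l = Q, b l) (fun p hp => ?_) hR
    rw [sum_sub_distrib, sum_supset_sum_fiber a hT, sum_supset_sum_fiber b hU, h p hp, sub_self]
  · have hT' : ∀ k ∈ univ.filter (T · = R), a k = 0 := fun k hk =>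
      absurd ((mem_filter.1 hk).2 ▸ hT k) hR
    have hU' : ∀ l ∈ univ.filter (U · = R), b l = 0 := fun l hl =>
      absurd ((mem_filter.1 hl).2 ▸ hU l) hR
    rw [sum_eq_zero hT', sum_eq_zero hU']

theorem coords_union (V₁ V₂ : Finset V) (E₁ E₂ : Finset (Finset V)) :
    coords (V₁ ∪ V₂) (E₁ ∪ E₂) = coords V₁ E₁ ∪ coords V₂ E₂ := by
  simp only [coords, image_union]
  ac_rfl

theorem sectionCoords_subset_coords {Vset V' : Finset V} (E : Finset (Finset V)) (hV' : V' ⊆ Vset) :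
    sectionCoords V' E ⊆ coords Vset E :=
  union_subset_union (image_subset_image hV') (filter_subset _ _)

theorem subset_of_mem_sectionCoords {V' p : Finset V} {E : Finset (Finset V)}
    (hp : p ∈ sectionCoords V' E) : p ⊆ V' := by
  rcases mem_union.1 hp with hp | hp
  · obtain ⟨v, hv, rfl⟩ := mem_image.1 hp
    exact singleton_subset_iff.2 hv
  · exact (mem_filter.1 hp).2

theorem mem_sectionCoords_of_subset {W V' p : Finset V} {E : Finset (Finset V)}
    (hcomplete : ∀ e ⊆ W, 2 ≤ e.card → e ∈ E) (hWV' : W ⊆ V') (hpW : p ⊆ W) (hp : p.Nonempty) :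
    p ∈ sectionCoords V' E := by
  obtain ⟨v, rfl⟩ | hnontriv := hp.exists_eq_singleton_or_nontrivial
  · exact mem_union_left _ (mem_image_of_mem _ (hWV' (singleton_subset_iff.1 hpW)))
  · exact mem_union_right _ (mem_filter.2
      ⟨hcomplete p hpW (one_lt_card_iff_nontrivial.2 hnontriv), hpW.trans hWV'⟩)

theorem MultilinearSet.apply_eq_subsetIndicator {Vset W p : Finset V} {E : Finset (Finset V)}
    {y : Finset V → ℝ} (hy : y ∈ MultilinearSet Vset E) (hW : W ⊆ Vset) (hp : p ∈ coords Vset E)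
    (hpW : p ⊆ W) : y p = subsetIndicator (onesOn W y) p := by
  obtain ⟨x, hx01, hxy, hxE⟩ := hy
  have hnode : ∀ v ∈ W, x v = if v ∈ onesOn W y then 1 else 0 := by
    intro v hv
    rcases hx01 v (hW hv) with h | h <;> simp [onesOn, hv, hxy v (hW hv), h]
  rcases mem_union.1 hp with hp | hp
  · obtain ⟨v, hv, rfl⟩ := mem_image.1 hp
    rw [hxy v hv, hnode v (singleton_subset_iff.1 hpW)]
    simp [subsetIndicator]
  · rw [hxE p hp, prod_congr rfl fun v hv => hnode v (hpW hv), prod_boole]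
    simp [subsetIndicator, subset_iff]

theorem mem_multilinearSet_of_eq_subsetIndicator {Vset : Finset V} {E : Finset (Finset V)}
    {y : Finset V → ℝ} (T : Finset V) (h : ∀ p ∈ coords Vset E, y p = subsetIndicator T p) :
    y ∈ MultilinearSet Vset E := by
  refine ⟨fun v => if v ∈ T then 1 else 0, fun v _ => ?_, fun v hv => ?_, fun e he => ?_⟩
  · by_cases hv : v ∈ T <;> simp [hv]
  · rw [h {v} (mem_union_left _ (mem_image_of_mem _ hv))]
    simp [subsetIndicator]
  · rw [h e (mem_union_right _ he), prod_boole]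
    simp [subsetIndicator, subset_iff]

theorem MultilinearSet.apply_eq_subsetIndicator_union {Vset V₁ V₂ p : Finset V}
    {E : Finset (Finset V)} {y₁ y₂ : Finset V → ℝ} (hy₁ : y₁ ∈ MultilinearSet Vset E)
    (hV₁ : V₁ ⊆ Vset) (h : onesOn (V₁ ∩ V₂) y₁ = onesOn (V₁ ∩ V₂) y₂) (hp : p ∈ coords Vset E)
    (hpV₁ : p ⊆ V₁) : y₁ p = subsetIndicator (onesOn V₁ y₁ ∪ onesOn V₂ y₂) p := by
  rw [MultilinearSet.apply_eq_subsetIndicator hy₁ hV₁ hp hpV₁,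
    subsetIndicator_union_of_inter_subset]
  intro v hv
  obtain ⟨hvp, hv₂⟩ := mem_inter.1 hv
  have hv₁₂ : v ∈ onesOn (V₁ ∩ V₂) y₂ := by
    simp only [onesOn, mem_filter, mem_inter] at hv₂ ⊢
    exact ⟨⟨hpV₁ hvp, hv₂.1⟩, hv₂.2⟩
  rw [← h] at hv₁₂
  exact filter_subset_filter _ inter_subset_left hv₁₂

theorem MultilinearSet.apply_eq_of_onesOn_eq {Vset W p : Finset V} {E : Finset (Finset V)}
    {y₁ y₂ : Finset V → ℝ} (hy₁ : y₁ ∈ MultilinearSet Vset E) (hy₂ : y₂ ∈ MultilinearSet Vset E)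
    (hW : W ⊆ Vset) (h : onesOn W y₁ = onesOn W y₂) (hp : p ∈ coords Vset E) (hpW : p ⊆ W) :
    y₁ p = y₂ p := by
  rw [MultilinearSet.apply_eq_subsetIndicator hy₁ hW hp hpW,
    MultilinearSet.apply_eq_subsetIndicator hy₂ hW hp hpW, h]

section Gluing

variable {Vset V₁ V₂ : Finset V} {E : Finset (Finset V)} {y₁ y₂ : Finset V → ℝ}

theorem piecewise_mem_multilinearSet (hV₁ : V₁ ⊆ Vset) (hV₂ : V₂ ⊆ Vset)
    (hcoords : sectionCoords V₁ E ∪ sectionCoords V₂ E = coords Vset E)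
    (hy₁ : y₁ ∈ MultilinearSet Vset E) (hy₂ : y₂ ∈ MultilinearSet Vset E)
    (h : onesOn (V₁ ∩ V₂) y₁ = onesOn (V₁ ∩ V₂) y₂) (z : Finset V → ℝ) :
    (sectionCoords V₁ E).piecewise y₁ ((sectionCoords V₂ E).piecewise y₂ z) ∈
      MultilinearSet Vset E := by
  refine mem_multilinearSet_of_eq_subsetIndicator (onesOn V₁ y₁ ∪ onesOn V₂ y₂) fun p hp => ?_
  by_cases hp₁ : p ∈ sectionCoords V₁ E
  · rw [piecewise_eq_of_mem _ _ _ hp₁]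
    exact MultilinearSet.apply_eq_subsetIndicator_union hy₁ hV₁ h hp
      (subset_of_mem_sectionCoords hp₁)
  · have hp₂ : p ∈ sectionCoords V₂ E := (mem_union.1 (hcoords ▸ hp)).resolve_left hp₁
    rw [piecewise_eq_of_notMem _ _ _ hp₁, piecewise_eq_of_mem _ _ _ hp₂, union_comm]
    rw [inter_comm] at h
    exact MultilinearSet.apply_eq_subsetIndicator_union hy₂ hV₂ h.symm hp
      (subset_of_mem_sectionCoords hp₂)

theorem piecewise_apply_of_mem_sectionCoords_right (hV₁ : V₁ ⊆ Vset)
    (hy₁ : y₁ ∈ MultilinearSet Vset E) (hy₂ : y₂ ∈ MultilinearSet Vset E)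
    (h : onesOn (V₁ ∩ V₂) y₁ = onesOn (V₁ ∩ V₂) y₂) (z : Finset V → ℝ) {p : Finset V}
    (hp₂ : p ∈ sectionCoords V₂ E) :
    (sectionCoords V₁ E).piecewise y₁ ((sectionCoords V₂ E).piecewise y₂ z) p = y₂ p := by
  by_cases hp₁ : p ∈ sectionCoords V₁ E
  · rw [piecewise_eq_of_mem _ _ _ hp₁]
    exact MultilinearSet.apply_eq_of_onesOn_eq hy₁ hy₂ (inter_subset_left.trans hV₁) h
      (sectionCoords_subset_coords E hV₁ hp₁)
      (subset_inter (subset_of_mem_sectionCoords hp₁) (subset_of_mem_sectionCoords hp₂))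
  · rw [piecewise_eq_of_notMem _ _ _ hp₁, piecewise_eq_of_mem _ _ _ hp₂]

end Gluing

theorem sum_mul_subsetIndicator_onesOn {κ : Type*} [Fintype κ] {Vset V' W p : Finset V}
    {E : Finset (Finset V)} (hWV' : W ⊆ V') (hV' : V' ⊆ Vset)
    (hcomplete : ∀ e ⊆ W, 2 ≤ e.card → e ∈ E) {a : κ → ℝ} {y : κ → Finset V → ℝ}
    {z : Finset V → ℝ} (hy : ∀ k, y k ∈ MultilinearSet Vset E)
    (hz : ∀ p ∈ sectionCoords V' E, z p = ∑ k, a k * y k p) (hpW : p ⊆ W) (hp : p.Nonempty) :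
    ∑ k, a k * subsetIndicator (onesOn W (y k)) p = z p := by
  have hpc := mem_sectionCoords_of_subset hcomplete hWV' hpW hp
  rw [hz p hpc]
  refine sum_congr rfl fun k _ => ?_
  rw [MultilinearSet.apply_eq_subsetIndicator (hy k) (hWV'.trans hV')
    (sectionCoords_subset_coords E hV' hpc) hpW]

theorem mem_iInter_of_eqOn {ι : Type*} {A : ι → Set (Finset V → ℝ)}
    {c₁ c₂ : Finset (Finset V)} (hA : ∀ i, DependsOnlyOn (A i) c₁ ∨ DependsOnlyOn (A i) c₂)
    {y₁ y₂ g : Finset V → ℝ} (hy₁ : y₁ ∈ ⋂ i, A i) (hy₂ : y₂ ∈ ⋂ i, A i)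
    (h₁ : ∀ p ∈ c₁, g p = y₁ p) (h₂ : ∀ p ∈ c₂, g p = y₂ p) : g ∈ ⋂ i, A i := by
  refine Set.mem_iInter.2 fun i => ?_
  rcases hA i with hi | hi
  · exact (hi g y₁ h₁).2 (Set.mem_iInter.1 hy₁ i)
  · exact (hi g y₂ h₂).2 (Set.mem_iInter.1 hy₂ i)

end Multilinear

theorem constrained_decomposition_general {V : Type} [DecidableEq V]
    (Vset V1 V2 : Finset V) (E : Finset (Finset V))
    (hV1 : V1 ⊆ Vset) (hV2 : V2 ⊆ Vset)
    (hVunion : V1 ∪ V2 = Vset)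
    (hEunion : (E.filter fun e => e ⊆ V1) ∪ (E.filter fun e => e ⊆ V2) = E)
    (hcomplete : ∀ e : Finset V, e ⊆ V1 ∩ V2 → 2 ≤ e.card → e ∈ E)
    {ι : Type} (A : ι → Set (Finset V → ℝ))
    (hA : ∀ i : ι, DependsOnlyOn (A i) (coords V1 (E.filter fun e => e ⊆ V1)) ∨
        DependsOnlyOn (A i) (coords V2 (E.filter fun e => e ⊆ V2))) :
    convexHull ℝ (MultilinearSet Vset E ∩ ⋂ i : ι, A i) =
      convexHull ℝ {z' | ∃ z ∈ MultilinearSet Vset E ∩ ⋂ i : ι, A i,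
          ∀ p ∈ coords V1 (E.filter fun e => e ⊆ V1), z' p = z p} ∩
        convexHull ℝ {z' | ∃ z ∈ MultilinearSet Vset E ∩ ⋂ i : ι, A i,
          ∀ p ∈ coords V2 (E.filter fun e => e ⊆ V2), z' p = z p} := by
  have hcoords : sectionCoords V1 E ∪ sectionCoords V2 E = coords Vset E := by
    rw [sectionCoords, sectionCoords, ← coords_union, hVunion, hEunion]
  refine Set.Subset.antisymm (Set.subset_inter (convexHull_mono fun z hz => ⟨z, hz, fun _ _ => rfl⟩)
    (convexHull_mono fun z hz => ⟨z, hz, fun _ _ => rfl⟩)) ?_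
  rintro z ⟨hz₁, hz₂⟩
  obtain ⟨κ₁, _, a, y₁, ha, ha1, hy₁, hz₁⟩ := exists_sum_eq_on_of_mem_convexHull hz₁
  obtain ⟨κ₂, _, b, y₂, hb, hb1, hy₂, hz₂⟩ := exists_sum_eq_on_of_mem_convexHull hz₂
  have hmoments : ∀ p ⊆ V1 ∩ V2, ∑ k, a k * subsetIndicator (onesOn (V1 ∩ V2) (y₁ k)) p =
      ∑ l, b l * subsetIndicator (onesOn (V1 ∩ V2) (y₂ l)) p := by
    intro p hp
    rcases p.eq_empty_or_nonempty with rfl | hne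
    · simp [subsetIndicator, ha1, hb1]
    · rw [sum_mul_subsetIndicator_onesOn inter_subset_left hV1 hcomplete (fun k => (hy₁ k).1) hz₁
          hp hne,
        sum_mul_subsetIndicator_onesOn inter_subset_right hV2 hcomplete (fun l => (hy₂ l).1) hz₂
          hp hne]
  obtain ⟨w, hw, hmatch, hrow, hcol⟩ := exists_coupling ha hb
    (sum_fiber_eq_of_sum_mul_subsetIndicator_eq (fun _ => filter_subset _ _)
      (fun _ => filter_subset _ _) hmoments)
  refine mem_convexHull_of_coupling hw hrow hcol ha1 hz₁ hz₂ fun k l hkl => ⟨?_, ?_⟩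
  · exact piecewise_mem_multilinearSet hV1 hV2 hcoords (hy₁ k).1 (hy₂ l).1 (hmatch k l hkl) z
  · exact mem_iInter_of_eqOn hA (hy₁ k).2 (hy₂ l).2 (fun p hp => piecewise_eq_of_mem _ _ _ hp)
      fun p hp => piecewise_apply_of_mem_sectionCoords_right hV1 (hy₁ k).1 (hy₂ l).1
        (hmatch k l hkl) z hp

/-- constrained decomposition of multilinear sets. Here the constrained set is
`C(G) = S(G) ∩ ⋂ᵢ Aᵢ`, where each constraint `Aᵢ` involves only the variables of `G₁` or only
those of `G₂`, and `C(Gᵢ)` is the projection of `C(G)` onto the coordinates of `Gᵢ`. -/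
theorem constrained_decomposition {V : Type} [Fintype V] [DecidableEq V]
    (Vset V1 V2 : Finset V) (E : Finset (Finset V))
    (hcard : ∀ e ∈ E, 2 ≤ e.card) (hsub : ∀ e ∈ E, e ⊆ Vset)
    (hV1 : V1 ⊆ Vset) (hV2 : V2 ⊆ Vset)
    (hVunion : V1 ∪ V2 = Vset)
    (hEunion : (E.filter fun e => e ⊆ V1) ∪ (E.filter fun e => e ⊆ V2) = E)
    (hcomplete : ∀ e : Finset V, e ⊆ V1 ∩ V2 → 2 ≤ e.card → e ∈ E)
    {ι : Type} (A : ι → Set (Finset V → ℝ))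
    (hA : ∀ i : ι, DependsOnlyOn (A i) (coords V1 (E.filter fun e => e ⊆ V1)) ∨
        DependsOnlyOn (A i) (coords V2 (E.filter fun e => e ⊆ V2))) :
    convexHull ℝ (MultilinearSet Vset E ∩ ⋂ i : ι, A i) =
      convexHull ℝ {z' | ∃ z ∈ MultilinearSet Vset E ∩ ⋂ i : ι, A i,
          ∀ p ∈ coords V1 (E.filter fun e => e ⊆ V1), z' p = z p} ∩
        convexHull ℝ {z' | ∃ z ∈ MultilinearSet Vset E ∩ ⋂ i : ι, A i,
          ∀ p ∈ coords V2 (E.filter fun e => e ⊆ V2), z' p = z p} :=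
  constrained_decomposition_general Vset V1 V2 E hV1 hV2 hVunion hEunion hcomplete A hA
end

section
/- Let 𝒞 be the set of maximal cliques of a binary undirected graphical model, let G_C be the complete hypergraph with node set C, and let G = ∪_{C∈𝒞} G_C. Let S^e(G) = {z ∈ S(G) : ∑_{∅ ≠ p ⊆ C} (−2)^{|p|−1} z_p = 0 for all C ∈ 𝒞} and let MP^e(G) be its convex hull. If 𝒞 has the running intersection property, then MP^e(G) equals the set of points z such that for every C ∈ 𝒞 the restriction of z to the coordinates indexed by nonempty subsets of C lies in MP(G_C) ∩ H_C, where H_C := {z : ∑_{∅ ≠ p ⊆ C} (−2)^{|p|−1} z_p = 0}. -/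
/-!
A point `z` of the right-hand side is, clique by clique, the moment vector `z_q = P(q ⊆ S)` of a
random subset `S` of `C`; the parity constraint `H_C` forces `|S|` to be even almost surely. Upper
moments determine a law, so the laws of two cliques have the same trace on their intersection.
Along a running-intersection ordering they glue, conditionally independently given the separator,
into one random subset of all nodes with every clique law as a marginal, and `z` is the mean of the
corresponding vertices `z_q = 𝟙[q ⊆ S]`, each of which satisfies all parity constraints.
-/

open Finset

/-- The edge set of the UGM hypergraph of a clique family `𝒞`. -/
def ugmEdges {V : Type} [DecidableEq V] (𝒞 : Finset (Finset V)) : Finset (Finset V) :=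
  𝒞.biUnion fun C => C.powerset.filter fun e => 2 ≤ e.card

/-- The linearized parity form of a clique `C`: `∑_{∅ ≠ p ⊆ C} (−2)^{|p|−1} z_p`. -/
def parityForm {V : Type} [DecidableEq V] (C : Finset V) (z : Finset V → ℝ) : ℝ :=
  ∑ p ∈ C.powerset.filter fun p => p.Nonempty, (-2 : ℝ) ^ (p.card - 1) * z p

/-- A finite family of sets has the running intersection property. -/
def HasRIP {α : Type} [DecidableEq α] (F : Finset (Finset α)) : Prop :=
  ∃ (m : ℕ) (p : Fin m → Finset α),
    (∀ i, p i ∈ F) ∧ (∀ C ∈ F, ∃ i, p i = C) ∧ Function.Injective p ∧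
      ∀ k : Fin m, (0 : ℕ) < (k : ℕ) →
        ∃ j : Fin m, j < k ∧
          p k ∩ (Finset.univ.filter fun i : Fin m => i < k).biUnion p ⊆ p j

namespace MultilinearPolytope

variable {V : Type} [DecidableEq V]

/-- The point of `S(G)` with `x = 𝟙_s`. -/
def vertex (s q : Finset V) : ℝ :=
  if q ⊆ s then 1 else 0

lemma vertex_eq_prod (s q : Finset V) : vertex s q = ∏ v ∈ q, if v ∈ s then 1 else 0 := by
  rw [prod_boole]
  rfl

lemma multilinearSet_mono {Vset Vset' : Finset V} {E E' : Finset (Finset V)} (hV : Vset' ⊆ Vset)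
    (hE : E' ⊆ E) : MultilinearSet Vset E ⊆ MultilinearSet Vset' E' :=
  fun _ ⟨x, hx01, hxV, hxE⟩ =>
    ⟨x, fun v hv => hx01 v (hV hv), fun v hv => hxV v (hV hv), fun e he => hxE e (hE he)⟩

lemma mem_multilinearSet_of_eq_vertex {Vset : Finset V} {E : Finset (Finset V)} {s : Finset V}
    {y : Finset V → ℝ} (hV : ∀ v ∈ Vset, y {v} = vertex s {v}) (hE : ∀ e ∈ E, y e = vertex s e) :
    y ∈ MultilinearSet Vset E := by
  refine ⟨fun v => if v ∈ s then 1 else 0, fun v _ => ?_, fun v hv => ?_, fun e he => ?_⟩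
  · by_cases hv : v ∈ s <;> simp [hv]
  · rw [hV v hv, vertex_eq_prod, prod_singleton]
  · rw [hE e he, vertex_eq_prod]

lemma exists_vertex_of_mem_multilinearSet {C : Finset V} {y : Finset V → ℝ}
    (hy : y ∈ MultilinearSet C (C.powerset.filter fun e => 2 ≤ e.card)) :
    ∃ S ⊆ C, ∀ q, q.Nonempty → q ⊆ C → y q = vertex S q := by
  obtain ⟨x, hx01, hxV, hxE⟩ := hy
  refine ⟨C.filter (x · = 1), filter_subset _ _, fun q hq hqC => ?_⟩
  have hprod : y q = ∏ v ∈ q, x v := by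
    rcases Nat.lt_or_ge q.card 2 with hcard | hcard
    · obtain ⟨v, rfl⟩ := card_eq_one.1 (show q.card = 1 by have := card_pos.2 hq; omega)
      rw [prod_singleton, hxV v (hqC (mem_singleton_self v))]
    · exact hxE q (mem_filter.2 ⟨mem_powerset.2 hqC, hcard⟩)
  rw [hprod, vertex_eq_prod]
  refine prod_congr rfl fun v hv => ?_
  rcases hx01 v (hqC hv) with h | h <;> simp [h, hqC hv]

lemma sum_powerset_neg_two_pow (s : Finset V) :
    ∑ p ∈ s.powerset, (-2 : ℝ) ^ p.card = (-1) ^ s.card := by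
  have h := prod_add (fun _ => (-2 : ℝ)) (fun _ => 1) s
  norm_num at h
  exact h.symm

lemma sum_nonempty_powerset_neg_two_pow (s : Finset V) :
    ∑ p ∈ s.powerset with p.Nonempty, (-2 : ℝ) ^ (p.card - 1) = (1 - (-1) ^ s.card) / 2 := by
  have hshift : ∑ p ∈ s.powerset with p.Nonempty, (-2 : ℝ) ^ (p.card - 1) * -2 =
      ∑ p ∈ s.powerset with p.Nonempty, (-2 : ℝ) ^ p.card :=
    sum_congr rfl fun p hp => by
      rw [← pow_succ, Nat.sub_add_cancel (card_pos.2 (mem_filter.1 hp).2)]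
  have hsum : ∑ p ∈ s.powerset with p.Nonempty, (-2 : ℝ) ^ p.card = (-1) ^ s.card - 1 := by
    have herase : s.powerset.filter (·.Nonempty) = s.powerset.erase ∅ := by
      ext p
      simp [nonempty_iff_ne_empty, and_comm]
    rw [herase, sum_erase_eq_sub (empty_mem_powerset s), sum_powerset_neg_two_pow, card_empty,
      pow_zero]
  rw [← sum_mul, hsum] at hshift
  linarith

lemma parityForm_vertex (C s : Finset V) :
    parityForm C (vertex s) = (1 - (-1) ^ (s ∩ C).card) / 2 := by
  rw [← sum_nonempty_powerset_neg_two_pow, parityForm]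
  simp only [vertex, mul_ite, mul_one, mul_zero, ← sum_filter, filter_filter]
  congr 1
  ext p
  simp only [mem_filter, mem_powerset, subset_inter_iff]
  tauto

lemma isLinearMap_parityForm (C : Finset V) : IsLinearMap ℝ (parityForm C) where
  map_add z z' := by simp only [parityForm, Pi.add_apply, mul_add, sum_add_distrib]
  map_smul a z := by
    simp only [parityForm, Pi.smul_apply, smul_eq_mul, mul_sum]
    exact sum_congr rfl fun _ _ => mul_left_comm _ _ _

lemma parityForm_congr {C : Finset V} {z z' : Finset V → ℝ}
    (h : ∀ q, q.Nonempty → q ⊆ C → z q = z' q) : parityForm C z = parityForm C z' :=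
  sum_congr rfl fun q hq => by
    rw [mem_filter, mem_powerset] at hq
    rw [h q hq.2 hq.1]

lemma biUnion_filter_val_lt_succ {m n : ℕ} (p : Fin m → Finset V) (hn : n < m) :
    (univ.filter fun i : Fin m => (i : ℕ) < n + 1).biUnion p =
      (univ.filter fun i : Fin m => (i : ℕ) < n).biUnion p ∪ p ⟨n, hn⟩ := by
  have hinsert : (univ.filter fun i : Fin m => (i : ℕ) < n + 1) =
      insert ⟨n, hn⟩ (univ.filter fun i : Fin m => (i : ℕ) < n) := by
    ext i
    simp only [mem_filter, mem_univ, true_and, mem_insert, Fin.ext_iff]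
    omega
  rw [hinsert, biUnion_insert, union_comm]

variable [Fintype V]

def marginal (A : Finset V) (w : Finset V → ℝ) (t : Finset V) : ℝ :=
  ∑ s with s ∩ A = t, w s

def moment (w : Finset V → ℝ) (p : Finset V) : ℝ :=
  ∑ s with p ⊆ s, w s

structure IsDistOn (A : Finset V) (w : Finset V → ℝ) : Prop where
  nonneg : ∀ s, 0 ≤ w s
  subset_of_ne_zero : ∀ s, w s ≠ 0 → s ⊆ A
  sum_eq_one : ∑ s, w s = 1

lemma isDistOn_pi_single {S A : Finset V} (h : S ⊆ A) : IsDistOn A (Pi.single S 1) where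
  nonneg s := by by_cases hs : s = S <;> simp [hs]
  subset_of_ne_zero s hs := by
    obtain rfl : s = S := by_contra fun hsS => hs (Pi.single_eq_of_ne hsS 1)
    exact h
  sum_eq_one := by simp

lemma convex_isDistOn (A : Finset V) : Convex ℝ {w | IsDistOn A w} := by
  intro μ hμ μ' hμ' a b ha hb hab
  refine ⟨fun s => ?_, fun s hs => ?_, ?_⟩
  · simp only [Pi.add_apply, Pi.smul_apply, smul_eq_mul]
    exact add_nonneg (mul_nonneg ha (hμ.nonneg s)) (mul_nonneg hb (hμ'.nonneg s))
  · by_contra hsA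
    simp [not_ne_iff.1 (mt (hμ.subset_of_ne_zero s) hsA),
      not_ne_iff.1 (mt (hμ'.subset_of_ne_zero s) hsA)] at hs
  · simp [sum_add_distrib, ← mul_sum, hμ.sum_eq_one, hμ'.sum_eq_one, hab]

lemma marginal_nonneg {A : Finset V} {w : Finset V → ℝ} (hw : ∀ s, 0 ≤ w s) (t : Finset V) :
    0 ≤ marginal A w t :=
  sum_nonneg fun s _ => hw s

lemma subset_of_marginal_ne_zero {A t : Finset V} {w : Finset V → ℝ}
    (h : marginal A w t ≠ 0) : t ⊆ A := by
  obtain ⟨s, hs, -⟩ := exists_ne_zero_of_sum_ne_zero h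
  rw [← (mem_filter.1 hs).2]
  exact inter_subset_right

lemma eq_zero_of_marginal_eq_zero {A s : Finset V} {w : Finset V → ℝ} (hw : ∀ s, 0 ≤ w s)
    (h : marginal A w (s ∩ A) = 0) : w s = 0 :=
  (sum_eq_zero_iff_of_nonneg fun s _ => hw s).1 h s (by simp)

lemma sum_marginal (A : Finset V) (w : Finset V → ℝ) :
    ∑ t, marginal A w t = ∑ s, w s :=
  sum_fiberwise univ (· ∩ A) w

lemma sum_filter_marginal (A : Finset V) (w : Finset V → ℝ) (P : Finset V → Prop)
    [DecidablePred P] : ∑ t with P t, marginal A w t = ∑ s with P (s ∩ A), w s := by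
  simp only [marginal]
  rw [sum_fiberwise_eq_sum_filter]
  simp only [mem_filter, mem_univ, true_and]

lemma marginal_marginal {D A : Finset V} (hDA : D ⊆ A) (w : Finset V → ℝ) :
    marginal D (marginal A w) = marginal D w := by
  funext u
  rw [marginal, sum_filter_marginal]
  simp only [inter_assoc, inter_eq_right.2 hDA, marginal]

lemma marginal_congr_of_subset {D A : Finset V} (hDA : D ⊆ A) {w w' : Finset V → ℝ}
    (h : marginal A w = marginal A w') : marginal D w = marginal D w' := by
  rw [← marginal_marginal hDA, h, marginal_marginal hDA]

lemma marginal_eq_sum_powerset {A B t : Finset V} {w : Finset V → ℝ} (ht : t ⊆ A)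
    (hw : ∀ s, w s ≠ 0 → s ⊆ A ∪ B) :
    marginal A w t = ∑ r ∈ (B \ A).powerset, w (t ∪ r) := by
  have hinter : ∀ r ∈ (B \ A).powerset, (t ∪ r) ∩ A = t := by grind
  have hsdiff : ∀ r ∈ (B \ A).powerset, (t ∪ r) \ A = r := by grind
  refine (sum_bij_ne_zero (fun r _ _ => t ∪ r) (fun r hr _ => by simpa using hinter r hr)
    (fun r₁ hr₁ _ r₂ hr₂ _ h => by rw [← hsdiff r₁ hr₁, h, hsdiff r₂ hr₂])
    (fun s hs hws => ?_) fun _ _ _ => rfl).symm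
  have hsA : s ∩ A = t := (mem_filter.1 hs).2
  have hunion : t ∪ s \ A = s := by grind
  have hsAB := hw s hws
  exact ⟨s \ A, by grind, by rwa [hunion], hunion⟩

lemma moment_empty (w : Finset V → ℝ) : moment w ∅ = ∑ s, w s := by
  simp [moment]

lemma moment_add_smul (a b : ℝ) (w w' : Finset V → ℝ) (p : Finset V) :
    moment (a • w + b • w') p = a * moment w p + b * moment w' p := by
  simp [moment, sum_add_distrib, mul_sum]

lemma moment_pi_single (S : Finset V) : moment (Pi.single S 1) = vertex S := by
  funext q
  simp [moment, vertex, Pi.single_apply]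

lemma moment_eq_sum_smul_vertex (w : Finset V → ℝ) : moment w = ∑ s, w s • vertex s := by
  funext p
  simp [moment, vertex, Finset.sum_apply, sum_filter]

lemma moment_marginal {A p : Finset V} (hpA : p ⊆ A) (w : Finset V → ℝ) :
    moment (marginal A w) p = moment w p := by
  simp only [moment, sum_filter_marginal, subset_inter_iff, hpA, and_true]

lemma eq_of_moment_eq {A : Finset V} {w w' : Finset V → ℝ}
    (hw : ∀ s, w s ≠ 0 → s ⊆ A) (hw' : ∀ s, w' s ≠ 0 → s ⊆ A)
    (h : ∀ p ⊆ A, moment w p = moment w' p) : w = w' := by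
  by_contra hne
  obtain ⟨s, hs, hmax⟩ := exists_max_image {s | w s ≠ w' s} card
    (by simpa [filter_nonempty_iff, funext_iff] using hne)
  have hws : w s ≠ w' s := (mem_filter.1 hs).2
  have hsA : s ⊆ A := by
    by_cases h0 : w s = 0
    · exact hw' s (h0 ▸ hws.symm)
    · exact hw s h0
  have hsingle : moment w s - moment w' s = w s - w' s := by
    rw [moment, moment, ← sum_sub_distrib]
    refine sum_eq_single_of_mem s (by simp) fun t ht hts => sub_eq_zero.2 ?_
    by_contra hwt
    have hst : s ⊂ t := ssubset_of_subset_of_ne (mem_filter.1 ht).2 (Ne.symm hts)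
    exact (card_lt_card hst).not_ge (hmax t (by simpa using hwt))
  rw [h s hsA, sub_self] at hsingle
  exact hws (sub_eq_zero.1 hsingle.symm)

lemma marginal_eq_of_moment_eq {D : Finset V} {w w' : Finset V → ℝ}
    (h : ∀ p ⊆ D, moment w p = moment w' p) : marginal D w = marginal D w' :=
  eq_of_moment_eq (fun _ => subset_of_marginal_ne_zero) (fun _ => subset_of_marginal_ne_zero)
    fun p hp => by rw [moment_marginal hp, moment_marginal hp, h p hp]

lemma marginal_inter_eq_of_moment_eq {C C' : Finset V} {z μ μ' : Finset V → ℝ}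
    (hμ : IsDistOn C μ) (hμ' : IsDistOn C' μ')
    (hz : ∀ q, q.Nonempty → q ⊆ C → moment μ q = z q)
    (hz' : ∀ q, q.Nonempty → q ⊆ C' → moment μ' q = z q) :
    marginal (C ∩ C') μ = marginal (C ∩ C') μ' := by
  refine marginal_eq_of_moment_eq fun q hq => ?_
  rcases q.eq_empty_or_nonempty with rfl | hq₀
  · rw [moment_empty, moment_empty, hμ.sum_eq_one, hμ'.sum_eq_one]
  · rw [hz q hq₀ (hq.trans inter_subset_left), hz' q hq₀ (hq.trans inter_subset_right)]

/-- Glues `ν` on `U` and `μ` on `C` so that the traces on `U` and on `C` are conditionally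
independent given the trace on `U ∩ C`. When `ν` and `μ` agree on `U ∩ C`, the denominator
vanishes only where the numerator does, so the junk value `x / 0 = 0` is harmless. -/
noncomputable def glue (U C : Finset V) (ν μ : Finset V → ℝ) (s : Finset V) : ℝ :=
  if s ⊆ U ∪ C then ν (s ∩ U) * μ (s ∩ C) / marginal (U ∩ C) μ (s ∩ (U ∩ C)) else 0

section glue

variable {U C : Finset V} {ν μ : Finset V → ℝ}

lemma subset_of_glue_ne_zero {s : Finset V} (h : glue U C ν μ s ≠ 0) : s ⊆ U ∪ C := by
  by_contra hs
  exact h (if_neg hs)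

lemma glue_comm (h : marginal (U ∩ C) ν = marginal (U ∩ C) μ) :
    glue U C ν μ = glue C U μ ν := by
  funext s
  rw [glue, glue, union_comm, inter_comm C U, ← h, mul_comm]

lemma marginal_glue_left (hν0 : ∀ s, 0 ≤ ν s) (hνU : ∀ s, ν s ≠ 0 → s ⊆ U)
    (hμC : ∀ s, μ s ≠ 0 → s ⊆ C) (h : marginal (U ∩ C) ν = marginal (U ∩ C) μ) :
    marginal U (glue U C ν μ) = ν := by
  funext t
  by_cases htU : t ⊆ U
  swap
  · rw [not_ne_iff.1 (mt subset_of_marginal_ne_zero htU), not_ne_iff.1 (mt (hνU t) htU)]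
  have htUC : t ∩ (U ∩ C) = t ∩ C := by grind
  have hm : marginal (U ∩ C) μ (t ∩ C) = ∑ r ∈ (C \ U).powerset, μ (t ∩ C ∪ r) := by
    rw [marginal_eq_sum_powerset (B := C) (by grind) fun s hs => (hμC s hs).trans (by grind),
      sdiff_inter_self_right]
  have hterm : ∀ r ∈ (C \ U).powerset,
      glue U C ν μ (t ∪ r) = ν t * μ (t ∩ C ∪ r) / marginal (U ∩ C) μ (t ∩ C) := by
    intro r hr
    rw [mem_powerset] at hr
    have e₁ : (t ∪ r) ∩ U = t := by grind
    have e₂ : (t ∪ r) ∩ C = t ∩ C ∪ r := by grind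
    have e₃ : (t ∪ r) ∩ (U ∩ C) = t ∩ C := by grind
    rw [glue, if_pos (by grind), e₁, e₂, e₃]
  rw [marginal_eq_sum_powerset htU fun s => subset_of_glue_ne_zero, sum_congr rfl hterm,
    ← sum_div, ← mul_sum, ← hm]
  exact mul_div_cancel_of_imp fun h0 => eq_zero_of_marginal_eq_zero hν0 (by rwa [h, htUC])

lemma exists_glue (hν : IsDistOn U ν) (hμ : IsDistOn C μ)
    (h : marginal (U ∩ C) ν = marginal (U ∩ C) μ) :
    ∃ ρ, IsDistOn (U ∪ C) ρ ∧ marginal U ρ = ν ∧ marginal C ρ = μ := by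
  have hleft := marginal_glue_left hν.nonneg hν.subset_of_ne_zero hμ.subset_of_ne_zero h
  have hright : marginal C (glue U C ν μ) = μ := by
    rw [glue_comm h]
    exact marginal_glue_left hμ.nonneg hμ.subset_of_ne_zero hν.subset_of_ne_zero
      (by rw [inter_comm]; exact h.symm)
  refine ⟨glue U C ν μ, ⟨fun s => ?_, fun s => subset_of_glue_ne_zero, ?_⟩, hleft, hright⟩
  · unfold glue
    split_ifs
    · exact div_nonneg (mul_nonneg (hν.nonneg _) (hμ.nonneg _)) (marginal_nonneg hμ.nonneg _)
    · exact le_rfl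
  · rw [← sum_marginal U, hleft, hν.sum_eq_one]

end glue

lemma exists_dist_of_runningIntersection {m : ℕ} (p : Fin m → Finset V)
    (μ : Fin m → Finset V → ℝ) (hμ : ∀ i, IsDistOn (p i) (μ i))
    (hcons : ∀ i j, marginal (p i ∩ p j) (μ i) = marginal (p i ∩ p j) (μ j))
    (hrip : ∀ k : Fin m, 0 < (k : ℕ) →
      ∃ j < k, p k ∩ (univ.filter fun i : Fin m => i < k).biUnion p ⊆ p j) :
    ∃ ν, IsDistOn (univ.biUnion p) ν ∧ ∀ i, marginal (p i) ν = μ i := by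
  suffices h : ∀ n ≤ m, ∃ ν, IsDistOn ((univ.filter fun i : Fin m => (i : ℕ) < n).biUnion p) ν ∧
      ∀ i : Fin m, (i : ℕ) < n → marginal (p i) ν = μ i by
    obtain ⟨ν, hν, hνμ⟩ := h m le_rfl
    rw [filter_true_of_mem fun i _ => i.2] at hν
    exact ⟨ν, hν, fun i => hνμ i i.2⟩
  intro n
  induction n with
  | zero => exact fun _ => ⟨_, isDistOn_pi_single (empty_subset _), by simp⟩
  | succ n ih =>
    intro hn
    obtain ⟨ν, hν, hνμ⟩ := ih (by omega)
    set k : Fin m := ⟨n, hn⟩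
    set U := (univ.filter fun i : Fin m => (i : ℕ) < n).biUnion p
    have hcons' : marginal (U ∩ p k) ν = marginal (U ∩ p k) (μ k) := by
      rcases Nat.eq_zero_or_pos n with rfl | hn₀
      · refine marginal_eq_of_moment_eq fun q hq => ?_
        rw [show q = ∅ by simpa [U] using hq, moment_empty, moment_empty, hν.sum_eq_one,
          (hμ k).sum_eq_one]
      obtain ⟨j, hjk, hj⟩ := hrip k hn₀
      replace hj : U ∩ p k ⊆ p j := by rw [inter_comm]; exact hj
      calc marginal (U ∩ p k) ν = marginal (U ∩ p k) (μ j) := by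
            rw [← hνμ j hjk, marginal_marginal hj]
        _ = marginal (U ∩ p k) (μ k) :=
            marginal_congr_of_subset (subset_inter hj inter_subset_right) (hcons j k)
    obtain ⟨ρ, hρ, hρU, hρk⟩ := exists_glue hν (hμ k) hcons'
    refine ⟨ρ, biUnion_filter_val_lt_succ p hn ▸ hρ, fun i hi => ?_⟩
    rcases Nat.lt_succ_iff_lt_or_eq.1 hi with hi | hi
    · rw [← hνμ i hi, ← hρU, marginal_marginal (subset_biUnion_of_mem p (by simpa using hi))]
    · rw [show i = k from Fin.ext hi, hρk]

lemma exists_dist_of_mem_convexHull {C : Finset V} {z : Finset V → ℝ}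
    (hz : z ∈ convexHull ℝ (MultilinearSet C (C.powerset.filter fun e => 2 ≤ e.card))) :
    ∃ μ, IsDistOn C μ ∧ ∀ q, q.Nonempty → q ⊆ C → moment μ q = z q := by
  refine convexHull_min
    (t := {z | ∃ μ, IsDistOn C μ ∧ ∀ q, q.Nonempty → q ⊆ C → moment μ q = z q})
    (fun y hy => ?_) ?_ hz
  · obtain ⟨S, hSC, hyS⟩ := exists_vertex_of_mem_multilinearSet hy
    exact ⟨_, isDistOn_pi_single hSC, fun q hq hqC => by rw [moment_pi_single, hyS q hq hqC]⟩
  · rintro z ⟨μ, hμ, hμz⟩ z' ⟨μ', hμ', hμz'⟩ a b ha hb hab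
    exact ⟨a • μ + b • μ', convex_isDistOn C hμ hμ' ha hb hab, fun q hq hqC => by
      simp [moment_add_smul, hμz q hq hqC, hμz' q hq hqC]⟩

lemma parityForm_moment (C : Finset V) (w : Finset V → ℝ) :
    parityForm C (moment w) = ∑ s, w s * ((1 - (-1) ^ (s ∩ C).card) / 2) := by
  have h := map_sum (IsLinearMap.mk' _ (isLinearMap_parityForm C)) (fun s => w s • vertex s) univ
  simpa [← moment_eq_sum_smul_vertex, parityForm_vertex] using h

lemma even_card_of_parityForm_eq_zero {C : Finset V} {z μ : Finset V → ℝ} (hμ : IsDistOn C μ)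
    (hz : ∀ q, q.Nonempty → q ⊆ C → moment μ q = z q) (h0 : parityForm C z = 0) {s : Finset V}
    (hs : μ s ≠ 0) : Even s.card := by
  have hodd_nonneg : ∀ t : Finset V, 0 ≤ (1 - (-1 : ℝ) ^ (t ∩ C).card) / 2 := fun t => by
    rcases neg_one_pow_eq_or ℝ (t ∩ C).card with h | h <;> rw [h] <;> norm_num
  rw [parityForm_congr fun q hq hqC => (hz q hq hqC).symm, parityForm_moment,
    sum_eq_zero_iff_of_nonneg fun t _ => mul_nonneg (hμ.nonneg t) (hodd_nonneg t)] at h0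
  have hpow := (mul_eq_zero.1 (h0 s (mem_univ s))).resolve_left hs
  rw [inter_eq_left.2 (hμ.subset_of_ne_zero s hs)] at hpow
  exact (neg_one_pow_eq_one_iff_even (R := ℝ) (by norm_num)).1 (by linarith)

lemma mem_convexHull_of_moment {𝒞 : Finset (Finset V)} {z ν : Finset V → ℝ}
    (hν0 : ∀ s, 0 ≤ ν s) (hν1 : ∑ s, ν s = 1)
    (hmom : ∀ C ∈ 𝒞, ∀ q, q.Nonempty → q ⊆ C → moment ν q = z q)
    (heven : ∀ C ∈ 𝒞, ∀ s, ν s ≠ 0 → Even (s ∩ C).card) :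
    z ∈ convexHull ℝ {z ∈ MultilinearSet (𝒞.sup id) (ugmEdges 𝒞) |
      ∀ C ∈ 𝒞, parityForm C z = 0} := by
  -- coordinates indexed by sets in no clique are unconstrained, so every point keeps `z` there
  let F : Finset V → Finset V → ℝ := fun s q =>
    if q.Nonempty ∧ ∃ C ∈ 𝒞, q ⊆ C then vertex s q else z q
  have hF : ∀ s, ν s ≠ 0 → F s ∈ {z ∈ MultilinearSet (𝒞.sup id) (ugmEdges 𝒞) |
      ∀ C ∈ 𝒞, parityForm C z = 0} := by
    intro s hs
    refine ⟨mem_multilinearSet_of_eq_vertex (fun v hv => if_pos ?_) (fun e he => if_pos ?_),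
      fun C hC => ?_⟩
    · obtain ⟨C, hC, hvC⟩ := mem_sup.1 hv
      exact ⟨singleton_nonempty v, C, hC, singleton_subset_iff.2 hvC⟩
    · obtain ⟨C, hC, he⟩ := mem_biUnion.1 he
      rw [mem_filter, mem_powerset] at he
      exact ⟨card_pos.1 (by omega), C, hC, he.1⟩
    · rw [parityForm_congr fun q hq hqC => if_pos ⟨hq, C, hC, hqC⟩, parityForm_vertex,
        (heven C hC s hs).neg_one_pow, sub_self, zero_div]
  have hsum : ∑ s with ν s ≠ 0, ν s • F s = z := by
    rw [sum_filter_of_ne fun s _ h => left_ne_zero_of_smul h]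
    funext q
    simp only [Finset.sum_apply, Pi.smul_apply, smul_eq_mul, F]
    split_ifs with hq
    · obtain ⟨hq, C, hC, hqC⟩ := hq
      rw [← hmom C hC q hq hqC, moment_eq_sum_smul_vertex]
      simp [Finset.sum_apply]
    · rw [← sum_mul, hν1, one_mul]
  rw [← hsum]
  exact (convex_convexHull ℝ _).sum_mem (fun s _ => hν0 s) (by rw [sum_filter_ne_zero, hν1])
    fun s hs => subset_convexHull ℝ _ (hF s (mem_filter.1 hs).2)

end MultilinearPolytope

open MultilinearPolytope in
theorem parity_constrained_clique_decomposition_general {V : Type} [Fintype V] [DecidableEq V]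
    (𝒞 : Finset (Finset V))
    (hRIP : HasRIP 𝒞) :
    convexHull ℝ {z ∈ MultilinearSet (𝒞.sup id) (ugmEdges 𝒞) |
        ∀ C ∈ 𝒞, parityForm C z = 0} =
      {z : Finset V → ℝ | ∀ C ∈ 𝒞,
        z ∈ convexHull ℝ (MultilinearSet C (C.powerset.filter fun e => 2 ≤ e.card)) ∧
          parityForm C z = 0} := by
  refine subset_antisymm (convexHull_min (fun z hz C hC => ⟨?_, hz.2 C hC⟩) ?_) fun z hz => ?_
  · exact subset_convexHull ℝ _
      (multilinearSet_mono (le_sup (f := id) hC) (subset_biUnion_of_mem _ hC) hz.1)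
  · intro z hz z' hz' a b ha hb hab C hC
    exact ⟨convex_convexHull ℝ _ (hz C hC).1 (hz' C hC).1 ha hb hab,
      convex_hyperplane (isLinearMap_parityForm C) 0 (hz C hC).2 (hz' C hC).2 ha hb hab⟩
  obtain ⟨m, p, hp𝒞, hsurj, -, hrip⟩ := hRIP
  choose μ hμ hμz using fun i => exists_dist_of_mem_convexHull (hz (p i) (hp𝒞 i)).1
  obtain ⟨ν, hν, hνμ⟩ := exists_dist_of_runningIntersection p μ hμ
    (fun i j => marginal_inter_eq_of_moment_eq (hμ i) (hμ j) (hμz i) (hμz j)) hrip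
  refine mem_convexHull_of_moment hν.nonneg hν.sum_eq_one (fun C hC q hq hqC => ?_)
    fun C hC s hs => ?_
  · obtain ⟨i, rfl⟩ := hsurj C hC
    rw [← moment_marginal hqC, hνμ i, hμz i q hq hqC]
  · obtain ⟨i, rfl⟩ := hsurj C hC
    refine even_card_of_parityForm_eq_zero (hμ i) (hμz i) (hz (p i) (hp𝒞 i)).2 ?_
    rw [← hνμ i]
    exact mt (eq_zero_of_marginal_eq_zero hν.nonneg) hs

/-- if the family `𝒞` of maximal cliques has the running intersection property,
then the convex hull `MP^e(G)` of the parity-constrained multilinear set of the UGM hypergraph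
equals the intersection over `C ∈ 𝒞` of `MP(G_C) ∩ H_C`. -/
theorem parity_constrained_clique_decomposition {V : Type} [Fintype V] [DecidableEq V]
    (𝒞 : Finset (Finset V))
    (hmax : ∀ C ∈ 𝒞, ∀ C' ∈ 𝒞, C ⊆ C' → C = C')
    (hRIP : HasRIP 𝒞) :
    convexHull ℝ {z ∈ MultilinearSet (𝒞.sup id) (ugmEdges 𝒞) |
        ∀ C ∈ 𝒞, parityForm C z = 0} =
      {z : Finset V → ℝ | ∀ C ∈ 𝒞,
        z ∈ convexHull ℝ (MultilinearSet C (C.powerset.filter fun e => 2 ≤ e.card)) ∧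
          parityForm C z = 0} :=
  parity_constrained_clique_decomposition_general 𝒞 hRIP
end
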